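/- Suppose homogeneous polynomials of degree 5 satisfy ℓ_μ^5 + 10 q ℓ_μ^3 + 15 q^2 ℓ_μ = ℓ_μ^5 + 10 q' ℓ_μ^3 + 30 (q')^2 ℓ_μ in ℂ[t₁,...,tₙ], where ℓ_μ is a nonzero linear form and q, q' are quadratic forms. Then both q and q' are scalar multiples of ℓ_μ². -/

import Mathlib

/-! After cancelling `5ℓ`, the hypothesis reads `3q² + 2qℓ² = 6q'² + 2q'ℓ²`, i.e.
`2A² - B² = ℓ⁴` for the quadratic forms `A = 3q + ℓ²` and `B = 6q' + ℓ²`. Factoring over `ℂ` as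
`(√2 A - B)(√2 A + B) = ℓ⁴`, and using that the linear form `ℓ` is prime in the factorial ring
`ℂ[t₁,…,tₙ]`, each quadratic factor is a scalar multiple of `ℓ²`; hence so are `A`, `B`, `q`
and `q'`. -/

open MvPolynomial

namespace MvPolynomial

variable {σ K : Type*} [Field K]

theorem prime_of_totalDegree_eq_one {p : MvPolynomial σ K} (hp : p.totalDegree = 1) :
    Prime p := by
  refine (irreducible_of_totalDegree_eq_one hp fun x hx => ?_).prime
  refine isUnit_iff_ne_zero.2 fun hx0 => ?_
  have : p = 0 := ext _ _ fun d => by simpa [hx0] using hx d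
  simp [this] at hp

theorem mem_span_pow_of_dvd_pow {ℓ U : MvPolynomial σ K} {m k : ℕ} (hℓ : ℓ.IsHomogeneous 1)
    (hℓ0 : ℓ ≠ 0) (hU : U.IsHomogeneous m) (hdvd : U ∣ ℓ ^ k) : U ∈ K ∙ ℓ ^ m := by
  obtain rfl | hU0 := eq_or_ne U 0
  · exact zero_mem _
  have hℓ_prime := prime_of_totalDegree_eq_one (hℓ.totalDegree hℓ0)
  obtain ⟨i, -, hassoc⟩ := (dvd_prime_pow hℓ_prime k).1 hdvd
  obtain ⟨u, rfl⟩ := hassoc.symm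
  obtain ⟨c, -, hu⟩ := isUnit_iff_eq_C_of_isReduced.1 u.isUnit
  rw [hu] at hU hU0 ⊢
  have hi : i = m := by
    simpa using ((hℓ.pow i).mul (isHomogeneous_C _ c)).inj_right hU hU0
  rw [Submodule.mem_span_singleton]
  exact ⟨c, by rw [hi, smul_eq_C_mul, mul_comm]⟩

end MvPolynomial

theorem Submodule.mem_and_mem_of_smul_sub_mem_of_smul_add_mem {K M : Type*} [Field K]
    [NeZero (2 : K)] [AddCommGroup M] [Module K M] (p : Submodule K M) {s : K} (hs : s ≠ 0)
    {a b : M} (hsub : s • a - b ∈ p) (hadd : s • a + b ∈ p) : a ∈ p ∧ b ∈ p := by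
  constructor
  · rw [← p.smul_mem_iff (mul_ne_zero two_ne_zero hs)]
    convert add_mem hsub hadd using 1
    module
  · rw [← p.smul_mem_iff (two_ne_zero (α := K))]
    convert sub_mem hadd hsub using 1
    module

/-- If a Gaussian and a Laplace fifth moment form with the same nonzero linear part agree,
i.e. `ℓ^5 + 10 q ℓ^3 + 15 q² ℓ = ℓ^5 + 10 q' ℓ^3 + 30 q'² ℓ` with `ℓ` a nonzero linear
form and `q, q'` quadratic forms, then both `q` and `q'` are scalar multiples of `ℓ²`. -/
theorem quadratics_are_multiples_of_square (n : ℕ)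
    (ℓ q q' : MvPolynomial (Fin n) ℂ)
    (hℓ : ℓ ∈ homogeneousSubmodule (Fin n) ℂ 1) (hℓ0 : ℓ ≠ 0)
    (hq : q ∈ homogeneousSubmodule (Fin n) ℂ 2)
    (hq' : q' ∈ homogeneousSubmodule (Fin n) ℂ 2)
    (heq : ℓ ^ 5 + 10 * q * ℓ ^ 3 + 15 * q ^ 2 * ℓ
         = ℓ ^ 5 + 10 * q' * ℓ ^ 3 + 30 * q' ^ 2 * ℓ) :
    (∃ c : ℂ, q = c • ℓ ^ 2) ∧ (∃ c' : ℂ, q' = c' • ℓ ^ 2) := by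
  have h5ℓ : (5 : MvPolynomial (Fin n) ℂ) * ℓ ≠ 0 := mul_ne_zero (by norm_num) hℓ0
  have hquartic : 3 * q ^ 2 + 2 * q * ℓ ^ 2 = 6 * q' ^ 2 + 2 * q' * ℓ ^ 2 :=
    mul_left_cancel₀ h5ℓ (by linear_combination heq)
  obtain ⟨s, hs⟩ := IsAlgClosed.exists_pow_nat_eq (2 : ℂ) two_pos
  set A := (3 : ℂ) • q + ℓ ^ 2
  set B := (6 : ℂ) • q' + ℓ ^ 2
  have hfactor : (s • A - B) * (s • A + B) = ℓ ^ 4 := by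
    have hsC : C s ^ 2 = (2 : MvPolynomial (Fin n) ℂ) := by rw [← map_pow, hs, map_ofNat]
    simp only [A, B, smul_eq_C_mul, map_ofNat]
    linear_combination 6 * hquartic + (3 * q + ℓ ^ 2) ^ 2 * hsC
  have hℓ2 : ℓ ^ 2 ∈ homogeneousSubmodule (Fin n) ℂ 2 := IsHomogeneous.pow hℓ 2
  have hA : A ∈ homogeneousSubmodule (Fin n) ℂ 2 := add_mem (Submodule.smul_mem _ _ hq) hℓ2
  have hB : B ∈ homogeneousSubmodule (Fin n) ℂ 2 := add_mem (Submodule.smul_mem _ _ hq') hℓ2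
  have hU := mem_span_pow_of_dvd_pow hℓ hℓ0 (sub_mem (Submodule.smul_mem _ s hA) hB)
    (Dvd.intro _ hfactor)
  have hV := mem_span_pow_of_dvd_pow hℓ hℓ0 (add_mem (Submodule.smul_mem _ s hA) hB)
    (Dvd.intro_left _ hfactor)
  have hs0 : s ≠ 0 := by rintro rfl; norm_num at hs
  obtain ⟨hAmem, hBmem⟩ :=
    Submodule.mem_and_mem_of_smul_sub_mem_of_smul_add_mem _ hs0 hU hV
  have hℓ2mem : ℓ ^ 2 ∈ ℂ ∙ ℓ ^ 2 := Submodule.mem_span_singleton_self _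
  have hqmem : (3 : ℂ) • q ∈ ℂ ∙ ℓ ^ 2 := by
    simpa only [A, add_sub_cancel_right] using sub_mem hAmem hℓ2mem
  have hq'mem : (6 : ℂ) • q' ∈ ℂ ∙ ℓ ^ 2 := by
    simpa only [B, add_sub_cancel_right] using sub_mem hBmem hℓ2mem
  rw [Submodule.smul_mem_iff _ (by norm_num), Submodule.mem_span_singleton] at hqmem hq'mem
  exact ⟨hqmem.imp fun _ h => h.symm, hq'mem.imp fun _ h => h.symm⟩
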